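/- Let α and β be disjoint nonempty sets with α ∪ β = {1,…,m}, let A = (a_{ij})_{i,j∈α} and B = (b_{ij})_{i,j∈β}, and define C = (c_{ij})_{i,j∈{1,…,m}} by c_{ij} = a_{ij} if i,j ∈ α, c_{ij} = b_{ij} if i,j ∈ β, and c_{ij} = 0 otherwise (block-diagonal join). Then: (i) if A ∈ 𝐔_{|α|} and B ∈ 𝐔_{|β|} then C ∈ 𝐔_m; (ii) if A is extreme in 𝐔_{|α|} and B is extreme in 𝐔_{|β|} then C is extreme in 𝐔_m; (iii) if A ∈ 𝐔^{|α|} and B ∈ 𝐔^{|β|} then C ∈ 𝐔^m. -/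
import Mathlib


open Matrix Finset

def IsInUGen {ι : Type*} [Fintype ι] [DecidableEq ι] (A : Matrix ι ι ℝ) : Prop :=
  A.IsSymm ∧ (∀ i j, 0 ≤ A i j) ∧
    ∀ γ : Finset ι, ∑ i ∈ γ, ∑ j ∈ γ, A i j ≤ (γ.card : ℝ)

def IsInUtopGen {ι : Type*} [Fintype ι] [DecidableEq ι] (A : Matrix ι ι ℝ) : Prop :=
  IsInUGen A ∧ ∑ i, ∑ j, A i j = (Fintype.card ι : ℝ)

def IsExtremeInGen {ι : Type*} [Fintype ι] [DecidableEq ι]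
    (S : Matrix ι ι ℝ → Prop) (A : Matrix ι ι ℝ) : Prop :=
  S A ∧ ∀ A₁ A₂, S A₁ → S A₂ → A₁ + A₂ = (2 : ℝ) • A → A₁ = A ∧ A₂ = A

lemma sub_mem_UGen {m : ℕ} (δ : Finset (Fin m)) (M : Matrix (Fin m) (Fin m) ℝ)
    (hM : IsInUGen M) :
    IsInUGen (fun (i j : {x // x ∈ δ}) => M i j : Matrix {x // x ∈ δ} {x // x ∈ δ} ℝ) := by
  refine ⟨Matrix.IsSymm.ext fun i j => hM.1.apply _ _, fun i j => hM.2.1 _ _, ?_⟩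
  intro γ'
  have h := hM.2.2 (γ'.map (Function.Embedding.subtype _))
  rw [Finset.card_map, Finset.sum_map] at h
  simp only [Finset.sum_map, Function.Embedding.coe_subtype] at h
  exact h

theorem stmt_16 {m : ℕ} (α β : Finset (Fin m))
    (hαne : α.Nonempty) (hβne : β.Nonempty)
    (hdisj : Disjoint α β) (hunion : α ∪ β = Finset.univ)
    (A : Matrix {i // i ∈ α} {i // i ∈ α} ℝ)
    (B : Matrix {i // i ∈ β} {i // i ∈ β} ℝ)
    (C : Matrix (Fin m) (Fin m) ℝ)
    (hC : ∀ i j : Fin m, C i j =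
      if hi : i ∈ α then
        (if hj : j ∈ α then A ⟨i, hi⟩ ⟨j, hj⟩ else 0)
      else if hi' : i ∈ β then
        (if hj' : j ∈ β then B ⟨i, hi'⟩ ⟨j, hj'⟩ else 0)
      else 0) :
    (IsInUGen A → IsInUGen B → IsInUGen C) ∧
      (IsExtremeInGen IsInUGen A → IsExtremeInGen IsInUGen B →
        IsExtremeInGen IsInUGen C) ∧
      (IsInUtopGen A → IsInUtopGen B → IsInUtopGen C) := by
  classical
  have hβiff : ∀ i : Fin m, i ∈ β ↔ i ∉ α := by
    intro i
    constructor
    · exact fun hb ha => Finset.disjoint_left.mp hdisj ha hb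
    · intro h
      have hu : i ∈ α ∪ β := hunion ▸ Finset.mem_univ i
      rcases Finset.mem_union.mp hu with h' | h'
      · exact absurd h' h
      · exact h'
  have hCa : ∀ (i j : Fin m) (hi : i ∈ α) (hj : j ∈ α), C i j = A ⟨i, hi⟩ ⟨j, hj⟩ := by
    intro i j hi hj; rw [hC]; simp [hi, hj]
  have hCb : ∀ (i j : Fin m) (hi : i ∈ β) (hj : j ∈ β), C i j = B ⟨i, hi⟩ ⟨j, hj⟩ := by
    intro i j hi hj
    rw [hC]
    simp [(hβiff i).mp hi, (hβiff j).mp hj, hi, hj]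
  have hC0 : ∀ (i j : Fin m), ¬(i ∈ α ∧ j ∈ α) → ¬(i ∈ β ∧ j ∈ β) → C i j = 0 := by
    intro i j h1 h2
    rw [hC]
    by_cases hi : i ∈ α <;> by_cases hj : j ∈ α <;>
      simp_all [hβiff]
  have hfbeq : ∀ γ : Finset (Fin m),
      γ.filter (· ∈ β) = γ.filter (fun i => ¬ i ∈ α) :=
    fun γ => Finset.filter_congr fun i _ => by simp [hβiff i]
  have keyA : ∀ γ : Finset (Fin m),
      ∑ i ∈ γ.filter (· ∈ α), ∑ j ∈ γ.filter (· ∈ α), C i j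
        = ∑ i ∈ γ.subtype (· ∈ α), ∑ j ∈ γ.subtype (· ∈ α), A i j := by
    intro γ
    rw [← Finset.subtype_map (p := (· ∈ α)), Finset.sum_map]
    refine Finset.sum_congr rfl fun i _ => ?_
    rw [Finset.sum_map]
    refine Finset.sum_congr rfl fun j _ => ?_
    simpa using hCa _ _ i.2 j.2
  have keyB : ∀ γ : Finset (Fin m),
      ∑ i ∈ γ.filter (· ∈ β), ∑ j ∈ γ.filter (· ∈ β), C i j
        = ∑ i ∈ γ.subtype (· ∈ β), ∑ j ∈ γ.subtype (· ∈ β), B i j := by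
    intro γ
    rw [← Finset.subtype_map (p := (· ∈ β)), Finset.sum_map]
    refine Finset.sum_congr rfl fun i _ => ?_
    rw [Finset.sum_map]
    refine Finset.sum_congr rfl fun j _ => ?_
    simpa using hCb _ _ i.2 j.2
  have keysplit : ∀ γ : Finset (Fin m),
      ∑ i ∈ γ, ∑ j ∈ γ, C i j
        = ∑ i ∈ γ.filter (· ∈ α), ∑ j ∈ γ.filter (· ∈ α), C i j
          + ∑ i ∈ γ.filter (· ∈ β), ∑ j ∈ γ.filter (· ∈ β), C i j := by
    intro γ
    rw [hfbeq, ← Finset.sum_filter_add_sum_filter_not γ (· ∈ α)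
      (fun i => ∑ j ∈ γ, C i j)]
    congr 1
    · refine Finset.sum_congr rfl fun i hi => ?_
      have hiα : i ∈ α := by simpa using (Finset.mem_filter.mp hi).2
      symm
      apply Finset.sum_subset (Finset.filter_subset _ _)
      intro j hj hj'
      have hjα : j ∉ α := fun h => hj' (Finset.mem_filter.mpr ⟨hj, h⟩)
      exact hC0 i j (fun h => hjα h.2) (fun h => (hβiff i).mp h.1 hiα)
    · refine Finset.sum_congr rfl fun i hi => ?_
      have hiα : i ∉ α := by simpa using (Finset.mem_filter.mp hi).2
      symm
      apply Finset.sum_subset (Finset.filter_subset _ _)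
      intro j hj hj'
      have hjα : j ∈ α := by
        by_contra hjα
        exact hj' (Finset.mem_filter.mpr ⟨hj, by simpa using hjα⟩)
      exact hC0 i j (fun h => hiα h.1) (fun h => (hβiff j).mp h.2 hjα)
  have keycard : ∀ γ : Finset (Fin m),
      (γ.subtype (· ∈ α)).card + (γ.subtype (· ∈ β)).card = γ.card := by
    intro γ
    rw [Finset.card_subtype, Finset.card_subtype, hfbeq,
      Finset.card_filter_add_card_filter_not]
  have part1 : IsInUGen A → IsInUGen B → IsInUGen C := by
    rintro ⟨hAs, hA0, hAsum⟩ ⟨hBs, hB0, hBsum⟩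
    refine ⟨Matrix.IsSymm.ext fun i j => ?_, fun i j => ?_, fun γ => ?_⟩
    · by_cases hi : i ∈ α <;> by_cases hj : j ∈ α
      · rw [hCa j i hj hi, hCa i j hi hj]; exact hAs.apply _ _
      · rw [hC0 j i (fun h => hj h.1) (fun h => (hβiff i).mp h.2 hi),
          hC0 i j (fun h => hj h.2) (fun h => (hβiff i).mp h.1 hi)]
      · rw [hC0 j i (fun h => hi h.2) (fun h => (hβiff j).mp h.1 hj),
          hC0 i j (fun h => hi h.1) (fun h => (hβiff j).mp h.2 hj)]
      · rw [hCb j i ((hβiff j).mpr hj) ((hβiff i).mpr hi),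
          hCb i j ((hβiff i).mpr hi) ((hβiff j).mpr hj)]
        exact hBs.apply _ _
    · rw [hC]
      split_ifs
      · exact hA0 _ _
      · exact le_refl 0
      · exact hB0 _ _
      · exact le_refl 0
      · exact le_refl 0
    · rw [keysplit, keyA, keyB]
      have h := add_le_add (hAsum (γ.subtype (· ∈ α))) (hBsum (γ.subtype (· ∈ β)))
      calc _ ≤ ((γ.subtype (· ∈ α)).card : ℝ) + ((γ.subtype (· ∈ β)).card : ℝ) := h
        _ = (γ.card : ℝ) := by rw [← keycard γ]; push_cast; ring
  have huA : (Finset.univ : Finset (Fin m)).subtype (· ∈ α) = Finset.univ := by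
    ext x; simp [x.2]
  have huB : (Finset.univ : Finset (Fin m)).subtype (· ∈ β) = Finset.univ := by
    ext x; simp [x.2]
  refine ⟨part1, ?_, ?_⟩
  · rintro ⟨hA, hAext⟩ ⟨hB, hBext⟩
    refine ⟨part1 hA hB, ?_⟩
    intro C₁ C₂ hC₁ hC₂ hsum
    have hadd : ∀ i j, C₁ i j + C₂ i j = 2 * C i j := by
      intro i j
      have h := congrFun (congrFun hsum i) j
      simpa [Matrix.add_apply, Matrix.smul_apply] using h
    have hzero : ∀ i j, ¬(i ∈ α ∧ j ∈ α) → ¬(i ∈ β ∧ j ∈ β) →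
        C₁ i j = 0 ∧ C₂ i j = 0 := by
      intro i j h1 h2
      have h := hadd i j
      rw [hC0 i j h1 h2] at h
      have h1' := hC₁.2.1 i j
      have h2' := hC₂.2.1 i j
      constructor <;> linarith
    have hA1U := sub_mem_UGen α C₁ hC₁
    have hA2U := sub_mem_UGen α C₂ hC₂
    have hB1U := sub_mem_UGen β C₁ hC₁
    have hB2U := sub_mem_UGen β C₂ hC₂
    have hAdec : (fun (i j : {x // x ∈ α}) => C₁ i j : Matrix _ _ ℝ)
        + (fun (i j : {x // x ∈ α}) => C₂ i j) = (2 : ℝ) • A := by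
      ext i j
      simp only [Matrix.add_apply, Matrix.smul_apply, smul_eq_mul]
      have hAC : A i j = C i j := by
        have h := hCa i j i.2 j.2
        simpa using h.symm
      rw [hAC]
      exact hadd _ _
    have hBdec : (fun (i j : {x // x ∈ β}) => C₁ i j : Matrix _ _ ℝ)
        + (fun (i j : {x // x ∈ β}) => C₂ i j) = (2 : ℝ) • B := by
      ext i j
      simp only [Matrix.add_apply, Matrix.smul_apply, smul_eq_mul]
      have hBC : B i j = C i j := by
        have h := hCb i j i.2 j.2
        simpa using h.symm
      rw [hBC]
      exact hadd _ _
    obtain ⟨hA1, hA2⟩ := hAext _ _ hA1U hA2U hAdec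
    obtain ⟨hB1, hB2⟩ := hBext _ _ hB1U hB2U hBdec
    constructor
    · ext i j
      by_cases hi : i ∈ α <;> by_cases hj : j ∈ α
      · rw [hCa i j hi hj]
        exact congrFun (congrFun hA1 ⟨i, hi⟩) ⟨j, hj⟩
      · rw [hC0 i j (fun h => hj h.2) (fun h => (hβiff i).mp h.1 hi)]
        exact (hzero i j (fun h => hj h.2) (fun h => (hβiff i).mp h.1 hi)).1
      · rw [hC0 i j (fun h => hi h.1) (fun h => (hβiff j).mp h.2 hj)]
        exact (hzero i j (fun h => hi h.1) (fun h => (hβiff j).mp h.2 hj)).1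
      · rw [hCb i j ((hβiff i).mpr hi) ((hβiff j).mpr hj)]
        exact congrFun (congrFun hB1 ⟨i, (hβiff i).mpr hi⟩) ⟨j, (hβiff j).mpr hj⟩
    · ext i j
      by_cases hi : i ∈ α <;> by_cases hj : j ∈ α
      · rw [hCa i j hi hj]
        exact congrFun (congrFun hA2 ⟨i, hi⟩) ⟨j, hj⟩
      · rw [hC0 i j (fun h => hj h.2) (fun h => (hβiff i).mp h.1 hi)]
        exact (hzero i j (fun h => hj h.2) (fun h => (hβiff i).mp h.1 hi)).2
      · rw [hC0 i j (fun h => hi h.1) (fun h => (hβiff j).mp h.2 hj)]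
        exact (hzero i j (fun h => hi h.1) (fun h => (hβiff j).mp h.2 hj)).2
      · rw [hCb i j ((hβiff i).mpr hi) ((hβiff j).mpr hj)]
        exact congrFun (congrFun hB2 ⟨i, (hβiff i).mpr hi⟩) ⟨j, (hβiff j).mpr hj⟩
  · rintro ⟨hA, hAsum⟩ ⟨hB, hBsum⟩
    refine ⟨part1 hA hB, ?_⟩
    have hcards : (α.card : ℝ) + β.card = m := by
      have h := Finset.card_union_of_disjoint hdisj
      rw [hunion, Finset.card_univ, Fintype.card_fin] at h
      push_cast [h]; ring
    calc ∑ i, ∑ j, C i j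
        = ∑ i ∈ Finset.univ.subtype (· ∈ α), ∑ j ∈ Finset.univ.subtype (· ∈ α), A i j
          + ∑ i ∈ Finset.univ.subtype (· ∈ β), ∑ j ∈ Finset.univ.subtype (· ∈ β), B i j := by
          rw [keysplit, keyA, keyB]
      _ = (α.card : ℝ) + β.card := by
          rw [huA, huB, hAsum, hBsum, Fintype.card_coe, Fintype.card_coe]
      _ = (Fintype.card (Fin m) : ℝ) := by rw [Fintype.card_fin]; exact hcards
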